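/- Define F(a, Y) = ∑_{n ∈ ℤ} (π(n - Y)⁵ - (5/a)(n - Y)³ - (1/4)(n - Y)) · exp(-aπ(n - Y)²). Then for all a ∈ [2, 24] and all Y ∈ [1/20, 2/5], F(a, Y) ≥ (1/100)·exp(-aπY²) > 0. -/

import Mathlib

/-!
Write `C = exp (-a π Y²)`. The terms `n = -1, 0, 1` of `Fsum a Y` add up to `C * centralSum a Y`;
the terms `n ≥ 2` are nonnegative, and the terms `n ≤ -2` are at least `-C e^{-5|n|}`, whose sum
is above `-C / 10000`. So it suffices that `centralSum ≥ 0.0101` on `[2, 24] × [1/20, 2/5]`.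
On a small box, monotonicity of each monomial in `a` and `Y`, the bounds `3.14 < π < 3.15` and
a Taylor lower bound for `exp` reduce this to a single rational inequality; 22 boxes cover the
whole range.
-/

noncomputable def Fsum (a Y : ℝ) : ℝ :=
  ∑' n : ℤ, (Real.pi * ((n : ℝ) - Y)^5 - (5 / a) * ((n : ℝ) - Y)^3 - (1/4) * ((n : ℝ) - Y)) *
    Real.exp (-a * Real.pi * ((n : ℝ) - Y)^2)

open Real Set Finset
open scoped Nat

noncomputable def fsumPoly (a x : ℝ) : ℝ := π * x ^ 5 - (5 / a) * x ^ 3 - (1 / 4) * x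

noncomputable def fsumTerm (a x : ℝ) : ℝ := fsumPoly a x * exp (-a * π * x ^ 2)

theorem Fsum_eq_tsum_fsumTerm (a Y : ℝ) : Fsum a Y = ∑' n : ℤ, fsumTerm a (n - Y) := rfl

theorem fsumTerm_neg (a x : ℝ) : fsumTerm a (-x) = -fsumTerm a x := by
  simp only [fsumTerm, fsumPoly]
  ring_nf

section Terms

variable {a x Y : ℝ}

theorem fsumPoly_nonneg (ha : 2 ≤ a) (hx : 8 / 5 ≤ x) : 0 ≤ fsumPoly a x := by
  have hq : 5 / a ≤ 5 / 2 := div_le_div_of_nonneg_left (by norm_num) (by norm_num) ha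
  have hx2 : 64 / 25 ≤ x ^ 2 := by nlinarith
  have key : 5 / a * x ^ 2 + 1 / 4 ≤ π * x ^ 4 := by
    nlinarith [pi_gt_three, mul_le_mul_of_nonneg_right hq (sq_nonneg x), sq_nonneg (x ^ 2)]
  have hfactor : fsumPoly a x = x * (π * x ^ 4 - (5 / a * x ^ 2 + 1 / 4)) := by
    unfold fsumPoly; ring
  rw [hfactor]
  exact mul_nonneg (by linarith) (by linarith)

theorem fsumTerm_nonneg (ha : 2 ≤ a) (hx : 8 / 5 ≤ x) : 0 ≤ fsumTerm a x :=
  mul_nonneg (fsumPoly_nonneg ha hx) (exp_pos _).le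

theorem fsumPoly_le_exp (ha : 0 < a) (hx : 1 ≤ x) : fsumPoly a x ≤ exp (3 * x ^ 2) := by
  have hx0 : 0 ≤ x := by linarith
  calc fsumPoly a x ≤ 4 * x ^ 5 := by
        unfold fsumPoly
        nlinarith [pi_lt_four, pow_nonneg hx0 5, pow_nonneg hx0 3,
          mul_nonneg (div_pos (by norm_num : (0 : ℝ) < 5) ha).le (pow_nonneg hx0 3)]
    _ ≤ (3 * x ^ 2) ^ 3 / 3 ! := by
        simp only [Nat.factorial]
        nlinarith [pow_nonneg hx0 5]
    _ ≤ exp (3 * x ^ 2) := pow_div_factorial_le_exp _ (by positivity) 3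

theorem fsumTerm_le_exp (ha : 0 < a) (hx : 1 ≤ x) :
    fsumTerm a x ≤ exp (-(a * π - 3) * x ^ 2) := by
  calc fsumTerm a x ≤ exp (3 * x ^ 2) * exp (-a * π * x ^ 2) :=
        mul_le_mul_of_nonneg_right (fsumPoly_le_exp ha hx) (exp_pos _).le
    _ = exp (-(a * π - 3) * x ^ 2) := by rw [← exp_add]; ring_nf

theorem fsumTerm_add_le_exp_mul_exp (ha : 2 ≤ a) (hY : 0 ≤ Y) (hY' : Y ≤ 2 / 5) {t : ℝ}
    (ht : 2 ≤ t) : fsumTerm a (t + Y) ≤ exp (-a * π * Y ^ 2) * exp (-5 * t) := by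
  have hapi : 6.28 ≤ a * π := by nlinarith [pi_gt_d2]
  rw [← exp_add]
  refine (fsumTerm_le_exp (by linarith) (by linarith)).trans (exp_le_exp.2 ?_)
  nlinarith [mul_le_mul_of_nonneg_right hapi (by positivity : 0 ≤ t ^ 2 + 2 * t * Y)]

end Terms

section Series

variable {a Y : ℝ}

theorem summable_fsumTerm_nat_add (ha : 2 ≤ a) (c : ℝ) :
    Summable fun n : ℕ ↦ fsumTerm a (n + c) := by
  refine Summable.of_norm_bounded_eventually
    ((Real.summable_one_div_nat_add_rpow c 2).2 one_lt_two) ?_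
  rw [Nat.cofinite_eq_atTop, Filter.eventually_atTop]
  refine ⟨⌈2 - c⌉₊, fun n hn ↦ ?_⟩
  have hx : 2 ≤ n + c := by linarith [Nat.ceil_le.1 hn]
  have hcoef : 1 ≤ a * π - 3 := by nlinarith [pi_gt_three]
  rw [Real.norm_of_nonneg (fsumTerm_nonneg ha (by linarith)), abs_of_nonneg (by linarith),
    rpow_two, one_div]
  calc fsumTerm a (n + c) ≤ exp (-(a * π - 3) * (n + c) ^ 2) :=
        fsumTerm_le_exp (by linarith) (by linarith)
    _ ≤ exp (-(n + c) ^ 2) := by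
        gcongr
        nlinarith [sq_nonneg ((n : ℝ) + c)]
    _ ≤ ((n + c) ^ 2)⁻¹ := by
        rw [exp_neg]
        gcongr
        linarith [add_one_le_exp (((n : ℝ) + c) ^ 2)]

theorem Fsum_eq_tsum_sub_tsum (ha : 2 ≤ a) (Y : ℝ) :
    Fsum a Y = ∑' n : ℕ, fsumTerm a (n + -Y) - ∑' n : ℕ, fsumTerm a (n + (1 + Y)) := by
  have hnat (n : ℕ) : fsumTerm a (((n : ℤ) : ℝ) - Y) = fsumTerm a (n + -Y) := by
    push_cast; ring_nf
  have hneg (n : ℕ) : fsumTerm a (((-(n + 1) : ℤ) : ℝ) - Y) = -fsumTerm a (n + (1 + Y)) := by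
    rw [← fsumTerm_neg]; push_cast; ring_nf
  rw [Fsum_eq_tsum_fsumTerm, tsum_of_nat_of_neg_add_one, sub_eq_add_neg, ← tsum_neg]
  · simp only [hnat, hneg]
  · simpa only [hnat] using summable_fsumTerm_nat_add ha (-Y)
  · simpa only [hneg] using (summable_fsumTerm_nat_add ha (1 + Y)).neg

theorem fsumTerm_add_fsumTerm_le_tsum (ha : 2 ≤ a) (hY : Y ≤ 2 / 5) :
    fsumTerm a (-Y) + fsumTerm a (1 - Y) ≤ ∑' n : ℕ, fsumTerm a (n + -Y) := by
  have hnonneg (n : ℕ) (hn : n ∉ ({0, 1} : Finset ℕ)) : 0 ≤ fsumTerm a (n + -Y) := by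
    have : (2 : ℝ) ≤ n := by
      norm_cast
      simp only [Finset.mem_insert, Finset.mem_singleton] at hn
      omega
    exact fsumTerm_nonneg ha (by linarith)
  simpa [Finset.sum_pair, sub_eq_add_neg] using
    (summable_fsumTerm_nat_add ha (-Y)).sum_le_tsum {0, 1} hnonneg

theorem exp_neg_ten_div_le : exp (-10) / (1 - exp (-5)) ≤ 1 / 10000 := by
  have hpow (n : ℕ) : exp (-n) ≤ 0.3678794412 ^ n := by
    rw [← mul_neg_one, exp_nat_mul]
    exact pow_le_pow_left₀ (exp_pos _).le exp_neg_one_lt_d9.le n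
  have h5 := hpow 5
  have h10 := hpow 10
  norm_num at h5 h10
  rw [div_le_iff₀ (by linarith)]
  linarith

theorem tsum_fsumTerm_nat_add_le (ha : 2 ≤ a) (hY : 0 ≤ Y) (hY' : Y ≤ 2 / 5) :
    ∑' n : ℕ, fsumTerm a (n + (1 + Y)) ≤ fsumTerm a (1 + Y) + exp (-a * π * Y ^ 2) / 10000 := by
  have hgeom : HasSum (fun n : ℕ ↦ exp (-5 * (n + 2))) (exp (-10) / (1 - exp (-5))) := by
    have hterm (n : ℕ) : exp (-5 * (n + 2)) = exp (-10) * exp (-5) ^ n := by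
      rw [← exp_nat_mul, ← exp_add]; ring_nf
    simp only [hterm, div_eq_mul_inv]
    exact (hasSum_geometric_of_lt_one (exp_pos (-5)).le (exp_lt_one_iff.2 (by norm_num))).mul_left _
  have htail : ∑' n : ℕ, fsumTerm a ((n + 1 : ℕ) + (1 + Y))
      ≤ exp (-a * π * Y ^ 2) * (exp (-10) / (1 - exp (-5))) := by
    refine hasSum_le (fun n ↦ ?_)
      ((summable_nat_add_iff 1).2 (summable_fsumTerm_nat_add ha (1 + Y))).hasSum
      (hgeom.mul_left _)
    rw [show ((n + 1 : ℕ) : ℝ) + (1 + Y) = n + 2 + Y by push_cast; ring]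
    exact fsumTerm_add_le_exp_mul_exp ha hY hY' (le_add_of_nonneg_left (Nat.cast_nonneg n))
  have hsmall := mul_le_mul_of_nonneg_left exp_neg_ten_div_le (exp_pos (-a * π * Y ^ 2)).le
  rw [(summable_fsumTerm_nat_add ha (1 + Y)).tsum_eq_zero_add]
  simp only [CharP.cast_eq_zero, zero_add]
  linarith

end Series

noncomputable def centralSum (a Y : ℝ) : ℝ :=
  -fsumPoly a Y + fsumPoly a (1 - Y) * exp (-(a * π * (1 - 2 * Y)))
    - fsumPoly a (1 + Y) * exp (-(a * π * (1 + 2 * Y)))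

theorem fsumTerm_central_eq (a Y : ℝ) :
    fsumTerm a (-Y) + fsumTerm a (1 - Y) - fsumTerm a (1 + Y)
      = exp (-a * π * Y ^ 2) * centralSum a Y := by
  have e₁ : exp (-a * π * (1 - Y) ^ 2) = exp (-a * π * Y ^ 2) * exp (-(a * π * (1 - 2 * Y))) := by
    rw [← exp_add]; ring_nf
  have e₂ : exp (-a * π * (1 + Y) ^ 2) = exp (-a * π * Y ^ 2) * exp (-(a * π * (1 + 2 * Y))) := by
    rw [← exp_add]; ring_nf
  simp only [fsumTerm, centralSum, e₁, e₂, neg_sq]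
  unfold fsumPoly
  ring

section Boxes

theorem fsumPoly_le_of_le {a a₂ x x₁ x₂ : ℝ} (ha : 0 < a) (ha₂ : a ≤ a₂) (hx₁ : 0 ≤ x₁)
    (hx₁x : x₁ ≤ x) (hxx₂ : x ≤ x₂) :
    fsumPoly a x ≤ 3.15 * x₂ ^ 5 - (5 / a₂) * x₁ ^ 3 - (1 / 4) * x₁ := by
  have hx : 0 ≤ x := hx₁.trans hx₁x
  have := pi_lt_d2
  unfold fsumPoly
  gcongr

theorem le_fsumPoly_of_le {a a₁ x x₁ x₂ : ℝ} (ha₁ : 0 < a₁) (ha₁a : a₁ ≤ a) (hx₁ : 0 ≤ x₁)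
    (hx₁x : x₁ ≤ x) (hxx₂ : x ≤ x₂) :
    3.14 * x₁ ^ 5 - (5 / a₁) * x₂ ^ 3 - (1 / 4) * x₂ ≤ fsumPoly a x := by
  have hx : 0 ≤ x := hx₁.trans hx₁x
  have := pi_gt_d2
  unfold fsumPoly
  gcongr

noncomputable def invExpTaylor (n : ℕ) (r : ℝ) : ℝ := (∑ i ∈ range n, r ^ i / i !)⁻¹

theorem exp_neg_le_invExpTaylor {n : ℕ} (hn : n ≠ 0) {r : ℝ} (hr : 0 ≤ r) :
    exp (-r) ≤ invExpTaylor n r := by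
  rw [exp_neg, invExpTaylor]
  refine inv_anti₀ (sum_pos' (fun i _ ↦ by positivity) ⟨0, ?_, by simp⟩)
    (sum_le_exp_of_nonneg hr n)
  simpa using Nat.pos_of_ne_zero hn

theorem min_mul_le_mul {α : Type*} [Ring α] [LinearOrder α] [IsOrderedRing α] {l L e q : α}
    (hL : L ≤ l) (he : 0 ≤ e) (heq : e ≤ q) : min L 0 * q ≤ l * e :=
  calc min L 0 * q ≤ min L 0 * e := mul_le_mul_of_nonpos_left heq (min_le_right _ _)
    _ ≤ l * e := mul_le_mul_of_nonneg_right ((min_le_left _ _).trans hL) he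

noncomputable def centralSumLower (a₁ a₂ Y₁ Y₂ : ℝ) : ℝ :=
  -(3.15 * Y₂ ^ 5 - (5 / a₂) * Y₁ ^ 3 - (1 / 4) * Y₁)
    + min (3.14 * (1 - Y₂) ^ 5 - (5 / a₁) * (1 - Y₁) ^ 3 - (1 / 4) * (1 - Y₁)) 0
      * invExpTaylor 12 (a₁ * 3.14 * (1 - 2 * Y₂))
    + min (-(3.15 * (1 + Y₂) ^ 5 - (5 / a₂) * (1 + Y₁) ^ 3 - (1 / 4) * (1 + Y₁))) 0
      * invExpTaylor 12 (a₁ * 3.14 * (1 + 2 * Y₁))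

theorem centralSumLower_le {a₁ a₂ Y₁ Y₂ a Y : ℝ} (ha₁ : 0 < a₁) (hY₁ : 0 ≤ Y₁)
    (hY₂ : Y₂ ≤ 1 / 2) (ha : a ∈ Icc a₁ a₂) (hY : Y ∈ Icc Y₁ Y₂) :
    centralSumLower a₁ a₂ Y₁ Y₂ ≤ centralSum a Y := by
  obtain ⟨ha₁a, ha₂⟩ := ha
  obtain ⟨hY₁Y, hYY₂⟩ := hY
  have ha0 : 0 < a := ha₁.trans_le ha₁a
  have hexp {s s₁ : ℝ} (hs₁ : 0 ≤ s₁) (hs : s₁ ≤ s) :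
      exp (-(a * π * s)) ≤ invExpTaylor 12 (a₁ * 3.14 * s₁) := by
    refine (exp_le_exp.2 (neg_le_neg ?_)).trans
      (exp_neg_le_invExpTaylor (by norm_num) (by positivity))
    have := pi_gt_d2
    gcongr
  have h₀ := fsumPoly_le_of_le ha0 ha₂ hY₁ hY₁Y hYY₂
  have h₁ := min_mul_le_mul
    (le_fsumPoly_of_le (x₁ := 1 - Y₂) (x := 1 - Y) (x₂ := 1 - Y₁) ha₁ ha₁a
      (by linarith) (by linarith) (by linarith))
    (exp_pos _).le (hexp (by linarith) (by linarith : 1 - 2 * Y₂ ≤ 1 - 2 * Y))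
  have h₂ := min_mul_le_mul
    (neg_le_neg (fsumPoly_le_of_le (x₁ := 1 + Y₁) (x := 1 + Y) (x₂ := 1 + Y₂) ha0 ha₂
      (by linarith) (by linarith) (by linarith)))
    (exp_pos _).le (hexp (by linarith) (by linarith : 1 + 2 * Y₁ ≤ 1 + 2 * Y))
  rw [centralSumLower, centralSum]
  linarith [neg_mul (fsumPoly a (1 + Y)) (exp (-(a * π * (1 + 2 * Y))))]

/-- The threshold `101 / 10000` leaves room for the `1 / 10000` lost in
`tsum_fsumTerm_nat_add_le`. -/
def CentralBoundOn (a₁ a₂ Y₁ Y₂ : ℝ) : Prop :=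
  ∀ a ∈ Icc a₁ a₂, ∀ Y ∈ Icc Y₁ Y₂, 101 / 10000 ≤ centralSum a Y

namespace CentralBoundOn

variable {a₁ a₂ Y₁ Y₂ : ℝ}

theorem of_lower (ha₁ : 0 < a₁) (hY₁ : 0 ≤ Y₁) (hY₂ : Y₂ ≤ 1 / 2)
    (h : 101 / 10000 ≤ centralSumLower a₁ a₂ Y₁ Y₂) : CentralBoundOn a₁ a₂ Y₁ Y₂ :=
  fun _ ha _ hY ↦ h.trans (centralSumLower_le ha₁ hY₁ hY₂ ha hY)

theorem of_split_a (a : ℝ) (h₁ : CentralBoundOn a₁ a Y₁ Y₂) (h₂ : CentralBoundOn a a₂ Y₁ Y₂) :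
    CentralBoundOn a₁ a₂ Y₁ Y₂ := fun b hb ↦
  (le_total b a).elim (fun h ↦ h₁ b ⟨hb.1, h⟩) (fun h ↦ h₂ b ⟨h, hb.2⟩)

theorem of_split_Y (Y : ℝ) (h₁ : CentralBoundOn a₁ a₂ Y₁ Y) (h₂ : CentralBoundOn a₁ a₂ Y Y₂) :
    CentralBoundOn a₁ a₂ Y₁ Y₂ := fun b hb Z hZ ↦
  (le_total Z Y).elim (fun h ↦ h₁ b hb Z ⟨hZ.1, h⟩) (fun h ↦ h₂ b hb Z ⟨h, hZ.2⟩)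

end CentralBoundOn

-- The subdivision was found by numerical bisection.
theorem centralBoundOn_two_twentyFour : CentralBoundOn 2 24 (1 / 20) (2 / 5) := by
  refine .of_split_Y (1 / 4)
    (.of_split_Y (3 / 20)
      (.of_split_a 13 (.of_split_a 8 (.of_split_a 5 (.of_split_a 4 (.of_split_a 3
        (.of_split_Y (1 / 10) (.of_split_Y (2 / 25) (.of_split_Y (3 / 50) ?_ ?_) ?_) ?_)
        ?_) ?_) ?_) ?_) ?_)
      (.of_split_Y (1 / 5) ?_ ?_))
    (.of_split_a 13 (.of_split_a 8 (.of_split_a 5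
      (.of_split_Y (3 / 10) ?_
        (.of_split_a 4
          (.of_split_Y (7 / 20) (.of_split_Y (8 / 25) ?_ ?_)
            (.of_split_a 3 (.of_split_a (5 / 2) (.of_split_Y (19 / 50) ?_ ?_) ?_) ?_))
          ?_))
      ?_) ?_) ?_)
  all_goals
    refine .of_lower (by norm_num) (by norm_num) (by norm_num) ?_
    norm_num [centralSumLower, invExpTaylor, Finset.sum_range_succ, Nat.factorial]

end Boxes

theorem Fsum_pos_middle (a Y : ℝ) (ha1 : 2 ≤ a) (ha2 : a ≤ 24)
    (hY1 : 1/20 ≤ Y) (hY2 : Y ≤ 2/5) :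
    (1/100) * Real.exp (-a * Real.pi * Y^2) ≤ Fsum a Y ∧
      0 < (1/100) * Real.exp (-a * Real.pi * Y^2) := by
  have hC := exp_pos (-a * π * Y ^ 2)
  refine ⟨?_, by positivity⟩
  have hcentral := mul_le_mul_of_nonneg_left
    (centralBoundOn_two_twentyFour a ⟨ha1, ha2⟩ Y ⟨hY1, hY2⟩) hC.le
  have hleft := fsumTerm_add_fsumTerm_le_tsum ha1 hY2
  have hright := tsum_fsumTerm_nat_add_le ha1 (by linarith) hY2
  have hsplit := fsumTerm_central_eq a Y
  rw [Fsum_eq_tsum_sub_tsum ha1]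
  linarith
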